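/- arXiv:2511.20485 — 4 statements merged into one kernel-verified Lean document; each statement's English description precedes it below -/
import Mathlib

section
/- For each fixed 0 < p ≤ ∞ there exist constants c, C > 0 such that for all n ∈ ℤ, c · e^{(n + 2/p)²/(4α)} ≤ ‖z^n‖_{F^p_α} ≤ C · e^{(n + 2/p)²/(4α)} (with the convention 2/p = 0 when p = ∞). -/
open Complex MeasureTheory

/-- The `F^p_α` norm (0 < p < ∞) of a function on `ℂ \ {0}`. -/
noncomputable def fockPNorm (α p : ℝ) (f : ℂ → ℂ) : ℝ :=
  (∫ z : ℂ, ‖f z‖ ^ p * Real.exp (-(p * α) * (Real.log (‖z‖)) ^ 2)) ^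
    (1 / p)

/-!
In the variable `t = log |z|` the weight `|z|^n e^{-α (log |z|)²}` becomes `e^{n t - α t²}`, and
completing the square gives `n t - α t² = n²/(4α) - α (t - n/(2α))²`. For `p = ∞` this shows that
the supremum is `e^{n²/(4α)}`, attained at `|z| = e^{n/(2α)}`. For `p < ∞`, polar coordinates and
`r = e^t` turn the `p`-th power of the norm into the Gaussian integral
`2π ∫ e^{-pα t² + (np + 2) t} dt = 2π √(π/(pα)) e^{(np+2)²/(4pα)}`, whose `p`-th root is an explicit
constant times `e^{(n + 2/p)²/(4α)}`.
-/

open Real Set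

lemma mul_sub_mul_sq_eq_sub_sq {b : ℝ} (hb : b ≠ 0) (c t : ℝ) :
    c * t - b * t ^ 2 = c ^ 2 / (4 * b) - b * (t - c / (2 * b)) ^ 2 := by
  field_simp
  ring

lemma integral_exp_neg_mul_sq_add_mul {b : ℝ} (hb : 0 < b) (c : ℝ) :
    ∫ t : ℝ, Real.exp (-b * t ^ 2 + c * t) = √(π / b) * Real.exp (c ^ 2 / (4 * b)) := by
  have h (t : ℝ) : -b * t ^ 2 + c * t = -b * (t - c / (2 * b)) ^ 2 + c ^ 2 / (4 * b) := by
    linear_combination mul_sub_mul_sq_eq_sub_sq hb.ne' c t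
  simp_rw [h, Real.exp_add]
  rw [integral_mul_const, integral_sub_right_eq_self (fun t => Real.exp (-b * t ^ 2)),
    integral_gaussian]

lemma Complex.integral_comp_norm (f : ℝ → ℝ) :
    ∫ z : ℂ, f ‖z‖ = 2 * π * ∫ r in Ioi (0 : ℝ), r * f r := by
  rw [integral_fun_norm_addHaar volume f, Complex.finrank_real_complex, Measure.real,
    Complex.volume_ball]
  simp [mul_assoc]

lemma integral_Ioi_zero_eq_integral_comp_exp (g : ℝ → ℝ) :
    ∫ x in Ioi (0 : ℝ), g x = ∫ t : ℝ, Real.exp t * g (Real.exp t) := by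
  have h := integral_image_eq_integral_abs_deriv_smul MeasurableSet.univ
    (fun x _ => (Real.hasDerivAt_exp x).hasDerivWithinAt) Real.exp_injective.injOn g
  rw [image_univ, Real.range_exp, Measure.restrict_univ] at h
  simpa [abs_of_pos (Real.exp_pos _)] using h

lemma integral_norm_rpow_mul_exp_neg_mul_log_sq {b : ℝ} (hb : 0 < b) (s : ℝ) :
    ∫ z : ℂ, ‖z‖ ^ s * Real.exp (-b * Real.log ‖z‖ ^ 2) =
      2 * π * √(π / b) * Real.exp ((s + 2) ^ 2 / (4 * b)) := by
  have hexp (t : ℝ) : Real.exp t * (Real.exp t * (Real.exp t ^ s *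
      Real.exp (-b * Real.log (Real.exp t) ^ 2))) = Real.exp (-b * t ^ 2 + (s + 2) * t) := by
    rw [Real.log_exp, rpow_def_of_pos (Real.exp_pos t), Real.log_exp, ← Real.exp_add,
      ← Real.exp_add, ← Real.exp_add]
    ring_nf
  rw [Complex.integral_comp_norm fun r => r ^ s * Real.exp (-b * Real.log r ^ 2),
    integral_Ioi_zero_eq_integral_comp_exp, funext hexp, integral_exp_neg_mul_sq_add_mul hb]
  ring

lemma fockPNorm_zpow {α p : ℝ} (hα : 0 < α) (hp : 0 < p) (n : ℤ) :
    fockPNorm α p (fun z => z ^ n) =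
      (2 * π * √(π / (p * α))) ^ (1 / p) * Real.exp (((n : ℝ) + 2 / p) ^ 2 / (4 * α)) := by
  have hnorm (z : ℂ) : ‖z ^ n‖ ^ p = ‖z‖ ^ ((n : ℝ) * p) := by
    rw [norm_zpow, ← rpow_intCast, rpow_mul (norm_nonneg z)]
  have hexponent : ((n : ℝ) * p + 2) ^ 2 / (4 * (p * α)) * (1 / p) =
      ((n : ℝ) + 2 / p) ^ 2 / (4 * α) := by
    field_simp
  simp_rw [fockPNorm, hnorm]
  rw [integral_norm_rpow_mul_exp_neg_mul_log_sq (mul_pos hp hα), mul_rpow (by positivity) (Real.exp_nonneg _), ← Real.exp_mul, hexponent]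

lemma norm_zpow_mul_exp_neg_mul_log_sq {z : ℂ} (hz : z ≠ 0) {α : ℝ} (hα : α ≠ 0) (n : ℤ) :
    ‖z ^ n‖ * Real.exp (-α * Real.log ‖z‖ ^ 2) =
      Real.exp ((n : ℝ) ^ 2 / (4 * α) - α * (Real.log ‖z‖ - n / (2 * α)) ^ 2) := by
  rw [← mul_sub_mul_sq_eq_sub_sq hα _ (Real.log ‖z‖), norm_zpow, ← rpow_intCast,
    rpow_def_of_pos (norm_pos_iff.mpr hz), ← Real.exp_add]
  ring_nf

theorem stmt3 (α : ℝ) (hα : 0 < α) :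
    (∀ p : ℝ, 0 < p → ∃ c C : ℝ, 0 < c ∧ 0 < C ∧ ∀ n : ℤ,
        c * Real.exp (((n : ℝ) + 2 / p) ^ 2 / (4 * α)) ≤
          fockPNorm α p (fun z => z ^ n) ∧
        fockPNorm α p (fun z => z ^ n) ≤
          C * Real.exp (((n : ℝ) + 2 / p) ^ 2 / (4 * α))) ∧
    (∃ c C : ℝ, 0 < c ∧ 0 < C ∧ ∀ n : ℤ,
        (∀ z : ℂ, z ≠ 0 →
          ‖z ^ n‖ * Real.exp (-α * (Real.log (‖z‖)) ^ 2) ≤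
            C * Real.exp ((n : ℝ) ^ 2 / (4 * α))) ∧
        (∃ z : ℂ, z ≠ 0 ∧
          c * Real.exp ((n : ℝ) ^ 2 / (4 * α)) ≤
            ‖z ^ n‖ * Real.exp (-α * (Real.log (‖z‖)) ^ 2))) := by
  refine ⟨fun p hp => ?_, ⟨1, 1, one_pos, one_pos, fun n => ⟨fun z hz => ?_, ?_⟩⟩⟩
  · have hK : 0 < (2 * π * √(π / (p * α))) ^ (1 / p) := by positivity
    exact ⟨_, _, hK, hK, fun n => by simp [fockPNorm_zpow hα hp n]⟩
  · rw [norm_zpow_mul_exp_neg_mul_log_sq hz hα.ne', one_mul, Real.exp_le_exp]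
    exact sub_le_self _ (by positivity)
  · set z : ℂ := (Real.exp (n / (2 * α)) : ℂ)
    have hz : z ≠ 0 := ofReal_ne_zero.mpr (Real.exp_ne_zero _)
    have hlog : Real.log ‖z‖ = n / (2 * α) := by
      rw [norm_real, Real.norm_of_nonneg (Real.exp_nonneg _), Real.log_exp]
    refine ⟨z, hz, ?_⟩
    rw [norm_zpow_mul_exp_neg_mul_log_sq hz hα.ne', hlog]
    simp
end

section
/- If g is entire, g(0) ≠ 0, and |g(z)| ≤ e^{α x²} for all z = x + iy ∈ ℂ, then limsup_{R→∞} (1/R²) ∫_0^R n(t)/t dt ≤ α/2, where n(t) counts zeros of g in the disk of radius t (with multiplicity). -/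
/-! Jensen's formula turns `∫₀ᴿ n(t)/t dt` into the mean of `log ‖g‖` over the circle of
radius `R` minus `log ‖g 0‖`. On that circle `log ‖g (R e^{iθ})‖ ≤ α R² cos² θ`, whose mean is
`α R² / 2`; after dividing by `R²` the constant `log ‖g 0‖` disappears in the limit. -/

open Complex Filter MeasureTheory

/-- `g` vanishes at `z` to order exactly `m`. -/
def hasZeroOrder (g : ℂ → ℂ) (z : ℂ) (m : ℕ) : Prop :=
  ∃ h : ℂ → ℂ, AnalyticAt ℂ h z ∧ h z ≠ 0 ∧ ∀ᶠ w in nhds z, g w = (w - z) ^ m * h w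

open Classical in
/-- The order (multiplicity) of the zero of `g` at `z` (junk value `0` if none exists). -/
noncomputable def zeroOrder (g : ℂ → ℂ) (z : ℂ) : ℕ :=
  if h : ∃ m, hasZeroOrder g z m then h.choose else 0

/-- The number of zeros of `g` in the closed disk of radius `t`, counted with multiplicity. -/
noncomputable def zeroCounting (g : ℂ → ℂ) (t : ℝ) : ℝ :=
  ∑' z : ↥(Metric.closedBall (0 : ℂ) t ∩ g ⁻¹' {0}), (zeroOrder g (z : ℂ) : ℝ)

open Metric

lemma hasZeroOrder_iff {g : ℂ → ℂ} {z : ℂ} {m : ℕ} :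
    hasZeroOrder g z m ↔ AnalyticAt ℂ g z ∧ analyticOrderAt g z = m := by
  constructor
  · rintro ⟨h, hh, hz, hg⟩
    have hgz : AnalyticAt ℂ g z :=
      (((analyticAt_id.sub analyticAt_const).pow m).mul hh).congr (hg.mono fun _ h => h.symm)
    exact ⟨hgz, hgz.analyticOrderAt_eq_natCast.mpr ⟨h, hh, hz, by simpa using hg⟩⟩
  · rintro ⟨hgz, hm⟩
    obtain ⟨h, hh, hz, hg⟩ := hgz.analyticOrderAt_eq_natCast.mp hm
    exact ⟨h, hh, hz, by simpa using hg⟩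

theorem zeroOrder_eq_analyticOrderNatAt (g : ℂ → ℂ) (z : ℂ) :
    zeroOrder g z = analyticOrderNatAt g z := by
  classical
  by_cases h : ∃ m, hasZeroOrder g z m
  · rw [zeroOrder, dif_pos h, analyticOrderNatAt, (hasZeroOrder_iff.mp h.choose_spec).2,
      ENat.toNat_natCast]
  · rw [zeroOrder, dif_neg h]
    by_cases hgz : AnalyticAt ℂ g z
    · have htop : analyticOrderAt g z = ⊤ := by
        by_contra hne
        exact h ⟨_, hasZeroOrder_iff.mpr ⟨hgz, (Nat.cast_analyticOrderNatAt hne).symm⟩⟩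
      simp [analyticOrderNatAt, htop]
    · simp [hgz]

theorem zeroOrder_eq_zero_iff {g : ℂ → ℂ} (hg : Differentiable ℂ g) (hg0 : g 0 ≠ 0) {z : ℂ} :
    zeroOrder g z = 0 ↔ g z ≠ 0 := by
  have htop : analyticOrderAt g z ≠ ⊤ := by
    rw [Ne, AnalyticOnNhd.analyticOrderAt_eq_top_iff_eq_zero z hg.analyticAt]
    exact fun h => hg0 (congrFun h 0)
  rw [zeroOrder_eq_analyticOrderNatAt, ← (hg.analyticAt z).analyticOrderAt_eq_zero,
    ← Nat.cast_analyticOrderNatAt htop, Nat.cast_eq_zero]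

theorem Differentiable.divisor_apply_eq_zeroOrder {g : ℂ → ℂ} (hg : Differentiable ℂ g)
    {U : Set ℂ} {z : ℂ} (hz : z ∈ U) :
    MeromorphicOn.divisor g U z = zeroOrder g z := by
  rw [MeromorphicOn.AnalyticOnNhd.divisor_apply (fun w _ => hg.analyticAt w) hz,
    zeroOrder_eq_analyticOrderNatAt, analyticOrderNatAt]
  cases analyticOrderAt g z <;> simp

theorem zeroCounting_eq_sum_filter {g : ℂ → ℂ} (hg : Differentiable ℂ g) (hg0 : g 0 ≠ 0)
    {t : ℝ} {S : Finset ℂ} (hS : closedBall 0 t ∩ g ⁻¹' {0} ⊆ S) :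
    zeroCounting g t = ∑ u ∈ S with ‖u‖ ≤ t, (zeroOrder g u : ℝ) := by
  classical
  rw [zeroCounting, tsum_subtype _ fun u => (zeroOrder g u : ℝ), tsum_eq_sum (s := S),
    Finset.sum_filter]
  · refine Finset.sum_congr rfl fun u _ => ?_
    by_cases hu : g u = 0
    · simp [Set.indicator_apply, hu]
    · simp [(zeroOrder_eq_zero_iff hg hg0).mpr hu]
  · exact fun u hu => Set.indicator_of_notMem (fun h => hu (hS h)) _

theorem zeroCounting_nonneg (g : ℂ → ℂ) (t : ℝ) : 0 ≤ zeroCounting g t :=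
  tsum_nonneg fun _ => Nat.cast_nonneg _

theorem intervalIntegrable_ite_le_inv {r : ℝ} (hr : 0 < r) (a b : ℝ) :
    IntervalIntegrable (fun t => if r ≤ t then t⁻¹ else 0) volume a b := by
  refine (intervalIntegrable_const (c := r⁻¹)).mono_fun'
    (Measurable.ite measurableSet_Ici measurable_inv measurable_const).aestronglyMeasurable
    (Eventually.of_forall fun t => ?_)
  dsimp only
  split_ifs with ht
  · rw [Real.norm_of_nonneg (inv_nonneg.mpr (hr.trans_le ht).le)]
    exact inv_anti₀ hr ht
  · simpa using hr.le

theorem integral_ite_le_inv {r R : ℝ} (hr : 0 < r) (hrR : r ≤ R) :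
    ∫ t in (0 : ℝ)..R, (if r ≤ t then t⁻¹ else 0) = Real.log (R / r) := by
  rw [← intervalIntegral.integral_add_adjacent_intervals (b := r)
    (intervalIntegrable_ite_le_inv hr _ _) (intervalIntegrable_ite_le_inv hr _ _)]
  have below : ∫ t in (0 : ℝ)..r, (if r ≤ t then t⁻¹ else 0) = 0 := by
    rw [intervalIntegral.integral_of_le hr.le, integral_Ioc_eq_integral_Ioo]
    refine (setIntegral_congr_fun measurableSet_Ioo fun t ht => ?_).trans
      (integral_zero _ _)
    exact if_neg (not_le.mpr ht.2)
  have above : ∫ t in r..R, (if r ≤ t then t⁻¹ else 0) = Real.log (R / r) := by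
    rw [intervalIntegral.integral_congr (g := fun t => t⁻¹) fun t ht => ?_]
    · exact integral_inv fun h0 => (hr.trans_le (Set.uIcc_of_le hrR ▸ h0).1).ne rfl
    · exact if_pos (Set.uIcc_of_le hrR ▸ ht).1
  rw [below, above, zero_add]

theorem integral_sum_filter_div {ι : Type*} {s : Finset ι} {r w : ι → ℝ} {R : ℝ}
    (hr : ∀ i ∈ s, 0 < r i ∧ r i ≤ R) :
    ∫ t in (0 : ℝ)..R, (∑ i ∈ s with r i ≤ t, w i) / t =
      ∑ i ∈ s, w i * Real.log (R / r i) := by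
  have hsum (t : ℝ) : (∑ i ∈ s with r i ≤ t, w i) / t =
      ∑ i ∈ s, w i * (if r i ≤ t then t⁻¹ else 0) := by
    rw [Finset.sum_filter, Finset.sum_div]
    refine Finset.sum_congr rfl fun i _ => ?_
    split_ifs <;> simp [div_eq_mul_inv]
  simp_rw [hsum]
  rw [intervalIntegral.integral_finsetSum fun i hi =>
    (intervalIntegrable_ite_le_inv (hr i hi).1 _ _).const_mul _]
  refine Finset.sum_congr rfl fun i hi => ?_
  rw [intervalIntegral.integral_const_mul, integral_ite_le_inv (hr i hi).1 (hr i hi).2]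

theorem integral_zeroCounting_div_eq_circleAverage_sub {g : ℂ → ℂ} (hg : Differentiable ℂ g)
    (hg0 : g 0 ≠ 0) {R : ℝ} (hR : 0 < R) :
    ∫ t in (0 : ℝ)..R, zeroCounting g t / t =
      Real.circleAverage (fun z => Real.log ‖g z‖) 0 R - Real.log ‖g 0‖ := by
  have hga : AnalyticOnNhd ℂ g (closedBall 0 |R|) := fun z _ => hg.analyticAt z
  set D := MeromorphicOn.divisor g (closedBall 0 |R|)
  set S := (D.finiteSupport (isCompact_closedBall 0 |R|)).toFinset
  have hS (u : ℂ) : u ∈ S ↔ ‖u‖ ≤ R ∧ g u = 0 := by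
    rw [Set.Finite.mem_toFinset, Function.mem_support]
    by_cases hu : u ∈ closedBall 0 |R|
    · rw [hg.divisor_apply_eq_zeroOrder hu, Nat.cast_ne_zero, Ne,
        zeroOrder_eq_zero_iff hg hg0, not_not]
      simp_all [abs_of_pos hR]
    · simp_all [abs_of_pos hR]
  rw [hga.circleAverage_log_norm hR.ne' hg0, add_sub_cancel_right]
  calc ∫ t in (0 : ℝ)..R, zeroCounting g t / t
      = ∫ t in (0 : ℝ)..R, (∑ u ∈ S with ‖u‖ ≤ t, (zeroOrder g u : ℝ)) / t := by
        refine intervalIntegral.integral_congr fun t ht => ?_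
        rw [Set.uIcc_of_le hR.le] at ht
        rw [zeroCounting_eq_sum_filter hg hg0 fun u hu => (hS u).mpr
          ⟨(mem_closedBall_zero_iff.mp hu.1).trans ht.2, hu.2⟩]
    _ = ∑ u ∈ S, (zeroOrder g u : ℝ) * Real.log (R / ‖u‖) := by
        refine integral_sum_filter_div fun u hu => ⟨norm_pos_iff.mpr ?_, ((hS u).mp hu).1⟩
        rintro rfl
        exact hg0 ((hS 0).mp hu).2
    _ = ∑ᶠ u, D u * Real.log (R * ‖0 - u‖⁻¹) := by
        rw [finsum_eq_sum_of_support_subset (s := S)]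
        · refine Finset.sum_congr rfl fun u hu => ?_
          rw [hg.divisor_apply_eq_zeroOrder
            (mem_closedBall_zero_iff.mpr ((abs_of_pos hR).symm ▸ ((hS u).mp hu).1)),
            zero_sub, norm_neg, div_eq_mul_inv, Int.cast_natCast]
        · intro u hu
          simpa [S] using Function.support_mul_subset_left _ _ hu

theorem circleAverage_re_sq (R : ℝ) :
    Real.circleAverage (fun z : ℂ => z.re ^ 2) 0 R = R ^ 2 / 2 := by
  have hre (θ : ℝ) : (circleMap 0 R θ).re ^ 2 = R ^ 2 * Real.cos θ ^ 2 := by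
    rw [circleMap_zero, Complex.re_ofReal_mul, Complex.exp_ofReal_mul_I_re]
    ring
  simp only [Real.circleAverage_def, hre, intervalIntegral.integral_const_mul, integral_cos_sq,
    smul_eq_mul, Real.cos_two_pi, Real.sin_two_pi, Real.cos_zero, Real.sin_zero]
  field_simp
  ring

theorem circleAverage_log_norm_le {g : ℂ → ℂ} (hg : Differentiable ℂ g) {α : ℝ} (hα : 0 ≤ α)
    (hbd : ∀ z : ℂ, ‖g z‖ ≤ Real.exp (α * z.re ^ 2)) (R : ℝ) :
    Real.circleAverage (fun z => Real.log ‖g z‖) 0 R ≤ α * R ^ 2 / 2 := by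
  calc Real.circleAverage (fun z => Real.log ‖g z‖) 0 R
      ≤ Real.circleAverage (fun z : ℂ => α * z.re ^ 2) 0 R := by
        refine Real.circleAverage_mono ?_ ?_ fun z _ => ?_
        · exact MeromorphicOn.circleIntegrable_log_norm
            fun z _ => (hg.analyticAt z).meromorphicAt
        · exact (by fun_prop : Continuous fun z : ℂ => α * z.re ^ 2).continuousOn
            |>.circleIntegrable'
        · rcases (norm_nonneg (g z)).eq_or_lt with hz | hz
          · rw [← hz, Real.log_zero]
            positivity
          · exact (Real.log_le_log hz (hbd z)).trans_eq (Real.log_exp _)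
    _ = α * R ^ 2 / 2 := by
        rw [show (fun z : ℂ => α * z.re ^ 2) = fun z => α • z.re ^ 2 from rfl,
          Real.circleAverage_fun_smul, circleAverage_re_sq, smul_eq_mul, mul_div_assoc]

theorem stmt6 (α : ℝ) (hα : 0 < α) (g : ℂ → ℂ)
    (hg : Differentiable ℂ g) (hg0 : g 0 ≠ 0)
    (hbd : ∀ z : ℂ, ‖g z‖ ≤ Real.exp (α * z.re ^ 2)) :
    Filter.limsup (fun R : ℝ => (1 / R ^ 2) * ∫ t in (0 : ℝ)..R, zeroCounting g t / t)
      Filter.atTop ≤ α / 2 := by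
  set bound : ℝ → ℝ := fun R => α / 2 - Real.log ‖g 0‖ / R ^ 2
  have hupper : ∀ᶠ R in atTop,
      (1 / R ^ 2) * ∫ t in (0 : ℝ)..R, zeroCounting g t / t ≤ bound R := by
    filter_upwards [eventually_gt_atTop 0] with R hR
    have hjensen := integral_zeroCounting_div_eq_circleAverage_sub hg hg0 hR
    have havg := circleAverage_log_norm_le hg hα.le hbd R
    calc (1 / R ^ 2) * ∫ t in (0 : ℝ)..R, zeroCounting g t / t
        ≤ (1 / R ^ 2) * (α * R ^ 2 / 2 - Real.log ‖g 0‖) := by gcongr; linarith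
      _ = bound R := by simp only [bound]; field_simp
  have hlower : ∀ᶠ R in atTop, 0 ≤ (1 / R ^ 2) * ∫ t in (0 : ℝ)..R, zeroCounting g t / t := by
    filter_upwards [eventually_gt_atTop 0] with R hR
    exact mul_nonneg (by positivity) (intervalIntegral.integral_nonneg hR.le
      fun t ht => div_nonneg (zeroCounting_nonneg g t) ht.1)
  have hbound : Tendsto bound atTop (nhds (α / 2)) := by
    simpa using (tendsto_const_nhds (x := α / 2)).sub
      (tendsto_const_nhds.div_atTop (tendsto_pow_atTop two_ne_zero))
  calc Filter.limsup (fun R : ℝ => (1 / R ^ 2) * ∫ t in (0 : ℝ)..R, zeroCounting g t / t) atTop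
      ≤ Filter.limsup bound atTop :=
        limsup_le_limsup hupper (isCoboundedUnder_le_of_eventually_le _ hlower)
          hbound.isBoundedUnder_le
    _ = α / 2 := hbound.limsup_eq
end

section
/- Evaluation bound: for 0 < p < ∞ and α > 0, there is a constant C such that for every w ∈ ℂ\{0} and every f ∈ F^p_α, |f(w)| ≤ C · e^{α(log|w|)²} |w|^{-2/p} ‖f‖_{F^p_α}. -/
/-!
On the disc `B(w, ‖w‖)`, which avoids `0`, the weight `exp (-α (log ‖z‖)²)` is comparable to the
modulus of the holomorphic function `exp (-α ℓ(z)²)`, where `ℓ = log w + log (z / w)` is a branch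
of the logarithm: `‖exp (-α ℓ²)‖ = exp (-α (log ‖z‖)²) · exp (α (im ℓ)²)` and `|im ℓ| ≤ 2π`.
So `g = f · exp (-α ℓ²)` is holomorphic there, and the sub-mean-value property of `‖g‖ ^ p` over
that disc bounds `‖f w‖ ^ p · exp (-p α (log ‖w‖)²)` by `exp (4π² p α) ‖f‖ᵖ / (π ‖w‖²)`.

The sub-mean-value property of `‖g‖ ^ p` for every `p > 0` comes from Jensen's formula,
`log ‖g c‖ ≤ circleAverage (log ‖g‖)`, followed by Jensen's inequality for `exp`, and is then
integrated over the radii in polar coordinates.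
-/

open Complex MeasureTheory Set Real Metric Filter
open scoped ENNReal

theorem exp_circleAverage_le {u : ℂ → ℝ} {c : ℂ} {R : ℝ} (hu : CircleIntegrable u c R)
    (hexp : CircleIntegrable (fun z ↦ Real.exp (u z)) c R) :
    Real.exp (circleAverage u c R) ≤ circleAverage (fun z ↦ Real.exp (u z)) c R := by
  simp only [circleAverage_eq_intervalAverage]
  exact convexOn_exp.map_set_average_le Real.continuous_exp.continuousOn isClosed_univ
    (by simp [pi_pos.ne']) (by simp [ENNReal.mul_eq_top]) (by simp)
    (intervalIntegrable_iff.1 hu) (intervalIntegrable_iff.1 hexp)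

theorem AnalyticOnNhd.log_norm_le_circleAverage {g : ℂ → ℂ} {c : ℂ} {R : ℝ} (hR : 0 < R)
    (hg : AnalyticOnNhd ℂ g (closedBall c R)) (hc : g c ≠ 0) :
    Real.log ‖g c‖ ≤ circleAverage (fun z ↦ Real.log ‖g z‖) c R := by
  rw [← abs_of_pos hR] at hg
  rw [hg.circleAverage_log_norm hR.ne' hc]
  refine le_add_of_nonneg_left (finsum_nonneg fun u ↦ ?_)
  by_cases hu : u ∈ closedBall c |R| ∧ u ≠ c
  · refine mul_nonneg (mod_cast MeromorphicOn.AnalyticOnNhd.divisor_nonneg hg u)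
      (Real.log_nonneg ?_)
    have hpos : 0 < ‖c - u‖ := norm_pos_iff.2 (sub_ne_zero.2 hu.2.symm)
    rw [← div_eq_mul_inv, one_le_div hpos, ← dist_eq_norm', ← abs_of_pos hR]
    exact hu.1
  · rw [not_and_or, not_ne_iff] at hu
    rcases hu with hu | rfl
    · simp [hu]
    · simp

theorem AnalyticOnNhd.norm_rpow_le_circleAverage {g : ℂ → ℂ} {c : ℂ} {R p : ℝ} (hp : 0 < p)
    (hR : 0 < R) (hg : AnalyticOnNhd ℂ g (closedBall c R)) :
    ‖g c‖ ^ p ≤ circleAverage (fun z ↦ ‖g z‖ ^ p) c R := by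
  rcases eq_or_ne (g c) 0 with hc | hc
  · rw [hc, norm_zero, zero_rpow hp.ne']
    exact circleAverage_nonneg_of_nonneg fun z _ ↦ by positivity
  have hlog : CircleIntegrable (fun z ↦ p * Real.log ‖g z‖) c R :=
    ((hg.mono (sphere_subset_closedBall.trans (by rw [abs_of_pos hR]))).meromorphicOn
      |>.circleIntegrable_log_norm).const_mul p
  -- `exp (p * log 0) = 1`, so the two sides differ exactly at the zeros of `g`, which are isolated.
  have hrpow : (fun z ↦ Real.exp (p * Real.log ‖g z‖)) =ᶠ[codiscreteWithin (sphere c |R|)]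
      fun z ↦ ‖g z‖ ^ p := by
    rw [abs_of_pos hR]
    filter_upwards [codiscreteWithin_mono sphere_subset_closedBall
      (hg.preimage_zero_mem_codiscreteWithin hc (mem_closedBall_self hR.le)
        (isConnected_closedBall hR.le))] with z hz
    rw [rpow_def_of_pos (norm_pos_iff.2 hz), mul_comm]
  have hcont : CircleIntegrable (fun z ↦ ‖g z‖ ^ p) c R := by
    refine ContinuousOn.circleIntegrable hR.le fun z hz ↦ ?_
    exact ((hg z (sphere_subset_closedBall hz)).continuousAt.norm.rpow_const
      (Or.inr hp.le)).continuousWithinAt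
  calc ‖g c‖ ^ p = Real.exp (p * Real.log ‖g c‖) := by
        rw [rpow_def_of_pos (norm_pos_iff.2 hc), mul_comm]
    _ ≤ Real.exp (p * circleAverage (fun z ↦ Real.log ‖g z‖) c R) := by
        gcongr
        exact hg.log_norm_le_circleAverage hR hc
    _ = Real.exp (circleAverage (fun z ↦ p * Real.log ‖g z‖) c R) := by
        rw [← smul_eq_mul, ← circleAverage_fun_smul]
        rfl
    _ ≤ circleAverage (fun z ↦ Real.exp (p * Real.log ‖g z‖)) c R :=
        exp_circleAverage_le hlog (hcont.congr_codiscreteWithin hrpow.symm)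
    _ = circleAverage (fun z ↦ ‖g z‖ ^ p) c R :=
        circleAverage_congr_codiscreteWithin hrpow hR.ne'

theorem add_polarCoord_symm_eq_circleMap (c : ℂ) (q : ℝ × ℝ) :
    c + Complex.polarCoord.symm q = circleMap c q.1 q.2 := by
  simp only [Complex.polarCoord_symm_apply, circleMap, Complex.exp_mul_I]
  push_cast
  ring

theorem setLIntegral_ball_eq_lintegral_circleMap {F : ℂ → ℝ≥0∞} {c : ℂ} {R : ℝ}
    (hF : ContinuousOn F (ball c R)) :
    ∫⁻ z in ball c R, F z =
      ∫⁻ r in Ioo 0 R, ENNReal.ofReal r * ∫⁻ θ in Ioo (-π) π, F (circleMap c r θ) := by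
  set S : Set (ℝ × ℝ) := Ioo 0 R ×ˢ Ioo (-π) π
  have hS : MeasurableSet S := measurableSet_Ioo.prod measurableSet_Ioo
  have hmem : ∀ q ∈ Complex.polarCoord.target,
      c + Complex.polarCoord.symm q ∈ ball c R ↔ q ∈ S := by
    rintro ⟨r, θ⟩ ⟨hr, hθ⟩
    simp only [mem_ball, dist_eq_norm, add_sub_cancel_left, Complex.norm_polarCoord_symm,
      abs_of_pos (show 0 < r from hr), S, mem_prod, mem_Ioo]
    simp only [mem_Ioo] at hθ
    tauto
  have hcont : ContinuousOn (fun q : ℝ × ℝ ↦ F (circleMap c q.1 q.2)) S := by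
    refine hF.comp (by fun_prop) fun q hq ↦ ?_
    rw [← add_polarCoord_symm_eq_circleMap, hmem q ⟨hq.1.1, hq.2⟩]
    exact hq
  calc ∫⁻ z in ball c R, F z
      = ∫⁻ z, (ball c R).indicator F (c + z) := by
        rw [lintegral_add_left_eq_self, lintegral_indicator measurableSet_ball]
    _ = ∫⁻ q in Complex.polarCoord.target,
          S.indicator (fun q ↦ ENNReal.ofReal q.1 * F (circleMap c q.1 q.2)) q := by
        rw [← Complex.lintegral_comp_polarCoord_symm]
        refine setLIntegral_congr_fun Complex.polarCoord.open_target.measurableSet fun q hq ↦ ?_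
        by_cases h : q ∈ S
        · rw [indicator_of_mem h, indicator_of_mem ((hmem q hq).2 h),
            add_polarCoord_symm_eq_circleMap, smul_eq_mul]
        · rw [indicator_of_notMem h, indicator_of_notMem (mt (hmem q hq).1 h), smul_zero]
    _ = ∫⁻ q in S, ENNReal.ofReal q.1 * F (circleMap c q.1 q.2) := by
        rw [lintegral_indicator hS, Measure.restrict_restrict hS, inter_eq_left.2]
        rintro ⟨r, θ⟩ ⟨hr, hθ⟩
        exact ⟨hr.1, hθ⟩
    _ = ∫⁻ r in Ioo 0 R, ENNReal.ofReal r * ∫⁻ θ in Ioo (-π) π, F (circleMap c r θ) := by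
        rw [Measure.volume_eq_prod, ← Measure.prod_restrict, lintegral_prod]
        · simp_rw [lintegral_const_mul' _ _ ENNReal.ofReal_ne_top]
        · rw [Measure.prod_restrict, ← Measure.volume_eq_prod]
          exact measurable_fst.ennreal_ofReal.aemeasurable.mul (hcont.aemeasurable hS)

theorem setLIntegral_ofReal_circleMap_eq_circleAverage {u : ℂ → ℝ} {c : ℂ} {r : ℝ}
    (hu : CircleIntegrable u c r) (hnn : 0 ≤ u) :
    ∫⁻ θ in Ioo (-π) π, ENNReal.ofReal (u (circleMap c r θ)) =
      ENNReal.ofReal (2 * π * circleAverage u c r) := by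
  have hper : Function.Periodic (fun θ ↦ u (circleMap c r θ)) (2 * π) := fun θ ↦ by
    simp [periodic_circleMap c r θ]
  have hint := hper.intervalIntegrable₀ two_pi_pos.ne' hu (-π) π
  rw [Measure.restrict_congr_set Ioo_ae_eq_Ioc, ← ofReal_integral_eq_lintegral_ofReal
    ((intervalIntegrable_iff_integrableOn_Ioc_of_le (by linarith [pi_pos])).1 hint)
    (Eventually.of_forall fun θ ↦ hnn _), ← intervalIntegral.integral_of_le (by linarith [pi_pos])]
  have := hper.intervalIntegral_add_eq (-π) 0
  rw [show -π + 2 * π = π by ring, zero_add] at this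
  rw [this, circleAverage_def, smul_eq_mul, ← mul_assoc, mul_inv_cancel₀ two_pi_pos.ne', one_mul]

theorem setLIntegral_Ioo_zero_ofReal {R : ℝ} (hR : 0 ≤ R) :
    ∫⁻ r in Ioo 0 R, ENNReal.ofReal r = ENNReal.ofReal (R ^ 2 / 2) := by
  rw [Measure.restrict_congr_set Ioo_ae_eq_Ioc, ← ofReal_integral_eq_lintegral_ofReal
    continuous_id'.integrableOn_Ioc (ae_restrict_of_forall_mem measurableSet_Ioc
      fun r (hr : r ∈ Ioc 0 R) ↦ hr.1.le), ← intervalIntegral.integral_of_le hR,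
    integral_id]
  ring_nf

theorem DifferentiableOn.norm_rpow_le_setLIntegral_ball {g : ℂ → ℂ} {c : ℂ} {R p : ℝ}
    (hp : 0 < p) (hR : 0 < R) (hg : DifferentiableOn ℂ g (ball c R)) :
    ENNReal.ofReal (π * R ^ 2 * ‖g c‖ ^ p) ≤
      ∫⁻ z in ball c R, ENNReal.ofReal (‖g z‖ ^ p) := by
  have hcont : ContinuousOn (fun z ↦ ‖g z‖ ^ p) (ball c R) :=
    hg.continuousOn.norm.rpow_const fun _ _ ↦ Or.inr hp.le
  have hcirc : ∀ r ∈ Ioo 0 R, ENNReal.ofReal (2 * π * ‖g c‖ ^ p) ≤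
      ∫⁻ θ in Ioo (-π) π, ENNReal.ofReal (‖g (circleMap c r θ)‖ ^ p) := by
    rintro r ⟨hr, hrR⟩
    have hsub : closedBall c r ⊆ ball c R := closedBall_subset_ball hrR
    rw [setLIntegral_ofReal_circleMap_eq_circleAverage
      ((hcont.mono (sphere_subset_closedBall.trans hsub)).circleIntegrable hr.le)
      fun z ↦ by positivity]
    gcongr
    exact ((hg.analyticOnNhd isOpen_ball).mono hsub).norm_rpow_le_circleAverage hp hr
  rw [setLIntegral_ball_eq_lintegral_circleMap (F := fun z ↦ ENNReal.ofReal (‖g z‖ ^ p))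
    (ENNReal.continuous_ofReal.comp_continuousOn hcont)]
  calc ENNReal.ofReal (π * R ^ 2 * ‖g c‖ ^ p)
      = ∫⁻ r in Ioo 0 R, ENNReal.ofReal r * ENNReal.ofReal (2 * π * ‖g c‖ ^ p) := by
        rw [lintegral_mul_const' _ _ ENNReal.ofReal_ne_top, setLIntegral_Ioo_zero_ofReal hR.le,
          ← ENNReal.ofReal_mul (by positivity)]
        ring_nf
    _ ≤ _ := setLIntegral_mono' measurableSet_Ioo fun r hr ↦ by gcongr; exact hcirc r hr

theorem div_mem_slitPlane_of_mem_ball {w z : ℂ} (hz : z ∈ ball w ‖w‖) : z / w ∈ slitPlane := by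
  have hw : 0 < ‖w‖ := pos_of_mem_ball hz
  have hlt : ‖z / w - 1‖ < 1 := by
    rw [div_sub_one (norm_pos_iff.1 hw), norm_div, div_lt_one hw, ← dist_eq_norm]
    exact hz
  have hre : (z / w).re = 1 + (z / w - 1).re := by simp
  refine Or.inl ?_
  linarith [neg_abs_le (z / w - 1).re, (abs_re_le_norm (z / w - 1)).trans_lt hlt]

noncomputable def logAround (w z : ℂ) : ℂ := log w + log (z / w)

theorem re_logAround {w z : ℂ} (hw : w ≠ 0) (hz : z ≠ 0) :
    (logAround w z).re = Real.log ‖z‖ := by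
  rw [logAround, add_re, log_re, log_re, norm_div,
    Real.log_div (norm_ne_zero_iff.2 hz) (norm_ne_zero_iff.2 hw)]
  ring

theorem abs_im_logAround_le (w z : ℂ) : |(logAround w z).im| ≤ 2 * π := by
  rw [logAround, add_im, log_im, log_im]
  linarith [abs_add_le (arg w) (arg (z / w)), abs_arg_le_pi w, abs_arg_le_pi (z / w)]

theorem differentiableOn_logAround (w : ℂ) : DifferentiableOn ℂ (logAround w) (ball w ‖w‖) :=
  fun _ hz ↦ ((differentiableAt_id.div_const w).clog (div_mem_slitPlane_of_mem_ball hz)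
    |>.const_add _).differentiableWithinAt

theorem norm_cexp_neg_mul_logAround_sq_rpow (p α : ℝ) {w z : ℂ} (hw : w ≠ 0) (hz : z ≠ 0) :
    ‖cexp (-α * logAround w z ^ 2)‖ ^ p =
      Real.exp (p * α * ((logAround w z).im ^ 2 - Real.log ‖z‖ ^ 2)) := by
  rw [norm_exp, ← Real.exp_mul, ← re_logAround hw hz]
  congr 1
  simp only [sq, mul_re, neg_re, ofReal_re, neg_im, ofReal_im, mul_im]
  ring

theorem ofReal_weighted_norm_rpow_le_lintegral {α p : ℝ} (hα : 0 ≤ α) (hp : 0 < p) {w : ℂ}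
    (hw : w ≠ 0) {f : ℂ → ℂ} (hf : DifferentiableOn ℂ f {0}ᶜ) :
    ENNReal.ofReal (π * ‖w‖ ^ 2 * (‖f w‖ ^ p * Real.exp (-(p * α) * Real.log ‖w‖ ^ 2))) ≤
      ENNReal.ofReal (Real.exp (4 * π ^ 2 * (p * α))) *
        ∫⁻ z, ENNReal.ofReal (‖f z‖ ^ p * Real.exp (-(p * α) * Real.log ‖z‖ ^ 2)) := by
  set g : ℂ → ℂ := fun z ↦ f z * cexp (-α * logAround w z ^ 2)
  have hball : ball w ‖w‖ ⊆ {0}ᶜ := fun z hz h0 ↦ by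
    simp only [mem_singleton_iff.1 h0, mem_ball, dist_zero_left, lt_irrefl] at hz
  have hg : DifferentiableOn ℂ g (ball w ‖w‖) :=
    (hf.mono hball).mul (((differentiableOn_logAround w).pow 2).const_mul _).cexp
  have hgp : ∀ z, z ≠ 0 → ‖g z‖ ^ p =
      ‖f z‖ ^ p * Real.exp (p * α * ((logAround w z).im ^ 2 - Real.log ‖z‖ ^ 2)) := fun z hz ↦ by
    rw [norm_mul, mul_rpow (norm_nonneg _) (norm_nonneg _),
      norm_cexp_neg_mul_logAround_sq_rpow p α hw hz]
  have hlow : ‖f w‖ ^ p * Real.exp (-(p * α) * Real.log ‖w‖ ^ 2) ≤ ‖g w‖ ^ p := by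
    rw [hgp w hw]
    refine mul_le_mul_of_nonneg_left (Real.exp_le_exp.2 ?_) (by positivity)
    nlinarith [mul_nonneg (mul_nonneg hp.le hα) (sq_nonneg (logAround w w).im)]
  have hup : ∀ z ∈ ball w ‖w‖, ENNReal.ofReal (‖g z‖ ^ p) ≤
      ENNReal.ofReal (Real.exp (4 * π ^ 2 * (p * α))) *
        ENNReal.ofReal (‖f z‖ ^ p * Real.exp (-(p * α) * Real.log ‖z‖ ^ 2)) := fun z hz ↦ by
    have him : (logAround w z).im ^ 2 ≤ 4 * π ^ 2 := by
      nlinarith [abs_im_logAround_le w z, sq_abs (logAround w z).im, abs_nonneg (logAround w z).im]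
    rw [← ENNReal.ofReal_mul (Real.exp_nonneg _), hgp z (hball hz), mul_left_comm, ← Real.exp_add]
    gcongr
    nlinarith [mul_nonneg (mul_nonneg hp.le hα) (sub_nonneg.2 him)]
  calc _ ≤ ENNReal.ofReal (π * ‖w‖ ^ 2 * ‖g w‖ ^ p) := by gcongr
    _ ≤ ∫⁻ z in ball w ‖w‖, ENNReal.ofReal (‖g z‖ ^ p) :=
        hg.norm_rpow_le_setLIntegral_ball hp (norm_pos_iff.2 hw)
    _ ≤ ∫⁻ z in ball w ‖w‖, ENNReal.ofReal (Real.exp (4 * π ^ 2 * (p * α))) *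
          ENNReal.ofReal (‖f z‖ ^ p * Real.exp (-(p * α) * Real.log ‖z‖ ^ 2)) :=
        setLIntegral_mono' measurableSet_ball hup
    _ ≤ _ := by
        rw [lintegral_const_mul' _ _ ENNReal.ofReal_ne_top]
        exact mul_le_mul_right (setLIntegral_le_lintegral _ _) _

theorem stmt12 (α p : ℝ) (hα : 0 < α) (hp : 0 < p) :
    ∃ C : ℝ, 0 < C ∧ ∀ w : ℂ, w ≠ 0 → ∀ f : ℂ → ℂ,
      DifferentiableOn ℂ f {(0 : ℂ)}ᶜ →
      (∫⁻ z : ℂ, ENNReal.ofReal (‖f z‖ ^ p *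
          Real.exp (-(p * α) * (Real.log (‖z‖)) ^ 2))) ≠ ⊤ →
      ‖f w‖ ≤
        C * Real.exp (α * (Real.log (‖w‖)) ^ 2) * ‖w‖ ^ (-(2 / p)) *
          ((∫⁻ z : ℂ, ENNReal.ofReal (‖f z‖ ^ p *
            Real.exp (-(p * α) * (Real.log (‖z‖)) ^ 2))).toReal) ^ (1 / p) := by
  refine ⟨π⁻¹ ^ (1 / p) * Real.exp (4 * π ^ 2 * α), by positivity, fun w hw f hf hI ↦ ?_⟩
  have hw_pos : 0 < ‖w‖ := norm_pos_iff.2 hw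
  have hmean := ofReal_weighted_norm_rpow_le_lintegral hα.le hp hw hf
  set I := ∫⁻ z : ℂ, ENNReal.ofReal (‖f z‖ ^ p * Real.exp (-(p * α) * Real.log ‖z‖ ^ 2))
  rw [← ENNReal.ofReal_toReal hI, ← ENNReal.ofReal_mul (Real.exp_nonneg _),
    ENNReal.ofReal_le_ofReal_iff (by positivity)] at hmean
  have hpow : ∀ x : ℝ, 0 ≤ x → (x ^ (1 / p)) ^ p = x := fun x hx ↦ by
    rw [← rpow_mul hx, one_div_mul_cancel hp.ne', rpow_one]
  have hrhs : (π⁻¹ ^ (1 / p) * Real.exp (4 * π ^ 2 * α) * Real.exp (α * Real.log ‖w‖ ^ 2) *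
      ‖w‖ ^ (-(2 / p)) * I.toReal ^ (1 / p)) ^ p = π⁻¹ * (‖w‖ ^ 2)⁻¹ *
        Real.exp (α * Real.log ‖w‖ ^ 2 * p) * (Real.exp (4 * π ^ 2 * (p * α)) * I.toReal) := by
    rw [mul_rpow (by positivity) (by positivity), mul_rpow (by positivity) (by positivity),
      mul_rpow (by positivity) (by positivity), mul_rpow (by positivity) (by positivity),
      hpow _ (by positivity), hpow _ ENNReal.toReal_nonneg, ← rpow_mul hw_pos.le, ← Real.exp_mul,
      ← Real.exp_mul, neg_mul, div_mul_cancel₀ _ hp.ne', rpow_neg hw_pos.le, rpow_two,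
      show 4 * π ^ 2 * (p * α) = 4 * π ^ 2 * α * p by ring]
    ring
  rw [← rpow_le_rpow_iff (norm_nonneg _) (by positivity) hp, hrhs]
  calc ‖f w‖ ^ p = π⁻¹ * (‖w‖ ^ 2)⁻¹ * Real.exp (α * Real.log ‖w‖ ^ 2 * p) *
        (π * ‖w‖ ^ 2 * (‖f w‖ ^ p * Real.exp (-(p * α) * Real.log ‖w‖ ^ 2))) := by
        rw [show -(p * α) * Real.log ‖w‖ ^ 2 = -(α * Real.log ‖w‖ ^ 2 * p) by ring, Real.exp_neg]
        field_simp
    _ ≤ _ := by gcongr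
end

section
/- Zero-counting estimate: let α, ε > 0 and suppose L ⊂ ℝ × [−π, π) has the property that every strip (x, x+l) × [−π, π) contains at least (2α + ε)l points of L for some fixed l > 0. Let Λ̃ ⊂ ℂ be the 2πi-periodic lift {u + 2πik : (Re u, Im u) ∈ L translated appropriately, k ∈ ℤ}, and let n(t) = #(Λ̃ ∩ tD). Then there exists C > 0 such that n(t) ≥ (2α + ε)(t²/2 − Ct) for all t ≥ 0. -/
/-!
Tile the plane by the rectangles `[jl, (j+1)l] × [(2k-1)π, (2k+1)π]`. Translating a strip by
`2πik` shows that every tile contains at least `(2α+ε)l` points of `Λ`, and the half-open tiles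
are disjoint. A tile has diameter at most `l + 2π`, so the tiles inside the closed disc of
radius `t` cover the open disc of radius `t - (l + 2π)`. Comparing areas, there are at least
`(t - l - 2π)² / (2l)` of them, so that disc of radius `t` contains at least
`(2α+ε)(t - l - 2π)²/2 ≥ (2α+ε)(t²/2 - (l + 2π)t)` points of `Λ`.
-/

open Complex Set Metric MeasureTheory

/- `η` is half the vertical period: the cells of row `k` are the translates by `2kηi` of the
base strip `-η ≤ im < η`. -/
noncomputable def cellIndex (l η : ℝ) (z : ℂ) : ℤ × ℤ :=
  (⌊z.re / l⌋, ⌊(z.im + η) / (2 * η)⌋)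

def closedCell (l η : ℝ) (p : ℤ × ℤ) : Set ℂ :=
  Icc (p.1 * l) ((p.1 + 1) * l) ×ℂ Icc ((2 * p.2 - 1) * η) ((2 * p.2 + 1) * η)

def cellsIn (l η t : ℝ) : Set (ℤ × ℤ) := {p | closedCell l η p ⊆ closedBall 0 t}

section Cells

variable {l η : ℝ}

theorem cellIndex_eq_iff (hl : 0 < l) (hη : 0 < η) {z : ℂ} {p : ℤ × ℤ} :
    cellIndex l η z = p ↔
      (p.1 * l ≤ z.re ∧ z.re < (p.1 + 1) * l) ∧
        ((2 * p.2 - 1) * η ≤ z.im ∧ z.im < (2 * p.2 + 1) * η) := by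
  have h2η : 0 < 2 * η := by positivity
  rw [cellIndex, Prod.ext_iff, Int.floor_eq_iff, Int.floor_eq_iff, le_div_iff₀ hl,
    div_lt_iff₀ hl, le_div_iff₀ h2η, div_lt_iff₀ h2η]
  constructor <;> rintro ⟨⟨h1, h2⟩, h3, h4⟩ <;> refine ⟨⟨?_, ?_⟩, ?_, ?_⟩ <;> linarith

theorem mem_closedCell_cellIndex (hl : 0 < l) (hη : 0 < η) (z : ℂ) :
    z ∈ closedCell l η (cellIndex l η z) := by
  obtain ⟨⟨h1, h2⟩, h3, h4⟩ := (cellIndex_eq_iff hl hη).1 (rfl : cellIndex l η z = _)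
  exact ⟨⟨h1, h2.le⟩, h3, h4.le⟩

theorem norm_sub_le_of_mem_closedCell {p : ℤ × ℤ} {z w : ℂ} (hz : z ∈ closedCell l η p)
    (hw : w ∈ closedCell l η p) : ‖w - z‖ ≤ l + 2 * η := by
  obtain ⟨⟨hz1, hz2⟩, hz3, hz4⟩ := hz
  obtain ⟨⟨hw1, hw2⟩, hw3, hw4⟩ := hw
  refine (norm_le_abs_re_add_abs_im _).trans (add_le_add ?_ ?_) <;>
    simp only [abs_le, sub_re, sub_im] <;> constructor <;> linarith

theorem ball_subset_biUnion_cellsIn (hl : 0 < l) (hη : 0 < η) (t : ℝ) :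
    ball (0 : ℂ) (t - (l + 2 * η)) ⊆ ⋃ p ∈ cellsIn l η t, closedCell l η p := by
  intro z hz
  have hzc := mem_closedCell_cellIndex hl hη z
  refine mem_biUnion (fun w hw => ?_) hzc
  rw [mem_ball_zero_iff] at hz
  rw [mem_closedBall_zero_iff]
  calc ‖w‖ ≤ ‖z‖ + ‖w - z‖ := norm_le_norm_add_norm_sub' w z
    _ ≤ t := by linarith [norm_sub_le_of_mem_closedCell hzc hw]

theorem finite_cellsIn (hl : 0 < l) (hη : 0 < η) (t : ℝ) : (cellsIn l η t).Finite := by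
  refine (Set.finite_Icc (-⌈t / l⌉, -⌈t / (2 * η)⌉) (⌈t / l⌉, ⌈t / (2 * η)⌉)).subset fun p hp => ?_
  have hw : (p.1 * l + 2 * p.2 * η * I : ℂ) ∈ closedCell l η p := by
    refine ⟨⟨?_, ?_⟩, ?_, ?_⟩ <;>
      simp only [add_re, add_im, mul_re, mul_im, ofReal_re, ofReal_im, intCast_re, intCast_im,
        I_re, I_im, re_ofNat, im_ofNat] <;> linarith
  have hnorm := mem_closedBall_zero_iff.1 (hp hw)
  have hre := (abs_re_le_norm _).trans hnorm
  have him := (abs_im_le_norm _).trans hnorm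
  norm_num [abs_mul, abs_of_pos hl, abs_of_pos hη] at hre him
  have h1 : |(p.1 : ℝ)| ≤ ⌈t / l⌉ := ((le_div_iff₀ hl).2 hre).trans (Int.le_ceil _)
  have h2 : |(p.2 : ℝ)| ≤ ⌈t / (2 * η)⌉ :=
    ((le_div_iff₀ (by positivity)).2 (by linarith)).trans (Int.le_ceil _)
  rw [abs_le] at h1 h2
  norm_cast at h1 h2
  exact ⟨⟨h1.1, h2.1⟩, h1.2, h2.2⟩

theorem volume_closedCell (p : ℤ × ℤ) :
    volume (closedCell l η p) = ENNReal.ofReal l * ENNReal.ofReal (2 * η) := by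
  change volume (measurableEquivRealProd ⁻¹' (Icc _ _ ×ˢ Icc _ _)) = _
  rw [volume_preserving_equiv_real_prod.measure_preimage
      (measurableSet_Icc.prod measurableSet_Icc).nullMeasurableSet,
    Measure.volume_eq_prod, Measure.prod_prod, Real.volume_Icc, Real.volume_Icc]
  ring_nf

theorem pi_mul_sq_le_ncard_cellsIn (hl : 0 < l) (hη : 0 < η) {t : ℝ} (ht : l + 2 * η ≤ t) :
    Real.pi * (t - (l + 2 * η)) ^ 2 ≤ (cellsIn l η t).ncard * (l * (2 * η)) := by
  have hfin := finite_cellsIn hl hη t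
  have hvol : volume (ball (0 : ℂ) (t - (l + 2 * η))) ≤
      (cellsIn l η t).ncard * (ENNReal.ofReal l * ENNReal.ofReal (2 * η)) :=
    calc _ ≤ volume (⋃ p ∈ hfin.toFinset, closedCell l η p) :=
          measure_mono (by simpa using ball_subset_biUnion_cellsIn hl hη t)
      _ ≤ ∑ p ∈ hfin.toFinset, volume (closedCell l η p) := measure_biUnion_finset_le _ _
      _ = _ := by simp [volume_closedCell, Set.ncard_eq_toFinset_card _ hfin]
  rw [Complex.volume_ball, ← ENNReal.ofReal_pow (by linarith), ← ENNReal.ofReal_mul hl.le,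
    ← ENNReal.ofReal_natCast, ← ENNReal.ofReal_mul (by positivity),
    ← ENNReal.ofReal_coe_nnreal, NNReal.coe_real_pi, ← ENNReal.ofReal_mul (by positivity),
    ENNReal.ofReal_le_ofReal_iff (by positivity)] at hvol
  simpa [mul_comm] using hvol

end Cells

theorem mem_add_int_mul_iff {α : Type*} [NonAssocRing α] {Λ : Set α} {c : α}
    (hper : ∀ z, z ∈ Λ ↔ z + c ∈ Λ) (k : ℤ) (z : α) : z + k * c ∈ Λ ↔ z ∈ Λ :=
  have hΛ : Function.Periodic (· ∈ Λ) c := fun z => propext (hper z).symm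
  Iff.of_eq (hΛ.int_mul k z)

open Finset in
theorem Finset.card_mul_le_of_le_card_fiber {ι κ : Type*} [DecidableEq κ] {s : Finset ι}
    {t : Finset κ} {g : ι → κ} {m : ℝ} (h : ∀ j ∈ t, m ≤ #{i ∈ s | g i = j}) :
    #t * m ≤ #s :=
  calc #t * m = ∑ j ∈ t, m := by rw [sum_const, nsmul_eq_mul]
    _ ≤ ∑ j ∈ t, (#{i ∈ s | g i = j} : ℝ) := sum_le_sum h
    _ = #{i ∈ s | g i ∈ t} := by rw [← sum_card_fiberwise_eq_card_filter]; push_cast; rfl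
    _ ≤ #s := by exact_mod_cast card_filter_le _ _

section Counting

variable {l η t : ℝ} {Λ : Set ℂ}

theorem ncard_strip_le_ncard_fiber (hl : 0 < l) (hη : 0 < η)
    (hper : ∀ z, z ∈ Λ ↔ z + 2 * η * I ∈ Λ) (hfin : (Λ ∩ closedBall 0 t).Finite)
    {p : ℤ × ℤ} (hp : p ∈ cellsIn l η t) :
    {z ∈ Λ | p.1 * l < z.re ∧ z.re < p.1 * l + l ∧ -η ≤ z.im ∧ z.im < η}.ncard ≤
      {z ∈ Λ ∩ closedBall 0 t | cellIndex l η z = p}.ncard := by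
  refine ncard_le_ncard_of_injOn (· + p.2 * (2 * η * I)) ?_ (add_left_injective _).injOn
    (hfin.subset (sep_subset _ _))
  rintro z ⟨hz, h1, h2, h3, h4⟩
  have hidx : cellIndex l η (z + p.2 * (2 * η * I)) = p := by
    rw [cellIndex_eq_iff hl hη]
    simp only [add_re, add_im, mul_re, mul_im, ofReal_re, ofReal_im, intCast_re, intCast_im,
      I_re, I_im, re_ofNat, im_ofNat]
    refine ⟨⟨?_, ?_⟩, ?_, ?_⟩ <;> linarith
  refine ⟨⟨(mem_add_int_mul_iff hper _ _).2 hz, hp ?_⟩, hidx⟩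
  simpa only [hidx] using mem_closedCell_cellIndex hl hη (z + p.2 * (2 * η * I))

theorem ncard_cellsIn_mul_le_ncard (hl : 0 < l) (hη : 0 < η)
    (hper : ∀ z, z ∈ Λ ↔ z + 2 * η * I ∈ Λ) (hfin : (Λ ∩ closedBall 0 t).Finite) {m : ℝ}
    (hstrip : ∀ x : ℝ,
      m ≤ ({z ∈ Λ | x < z.re ∧ z.re < x + l ∧ -η ≤ z.im ∧ z.im < η}.ncard : ℝ)) :
    (cellsIn l η t).ncard * m ≤ (Λ ∩ closedBall 0 t).ncard := by
  classical
  rw [ncard_eq_toFinset_card _ (finite_cellsIn hl hη t), ncard_eq_toFinset_card _ hfin]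
  refine Finset.card_mul_le_of_le_card_fiber (g := cellIndex l η) fun p hp => ?_
  rw [Finite.mem_toFinset] at hp
  calc m ≤ _ := hstrip (p.1 * l)
    _ ≤ ({z ∈ Λ ∩ closedBall 0 t | cellIndex l η z = p}.ncard : ℝ) := by
      exact_mod_cast ncard_strip_le_ncard_fiber hl hη hper hfin hp
    _ = _ := by rw [← ncard_coe_finset, Finset.coe_filter]; simp only [Finite.mem_toFinset]

end Counting

theorem stmt18 (α ε l : ℝ) (hα : 0 < α) (hε : 0 < ε) (hl : 0 < l)
    (Λ : Set ℂ)
    (hper : ∀ z : ℂ, z ∈ Λ ↔ z + 2 * Real.pi * Complex.I ∈ Λ)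
    (hfin : ∀ t : ℝ, (Λ ∩ Metric.closedBall (0 : ℂ) t).Finite)
    (hstrip : ∀ x : ℝ,
      (2 * α + ε) * l ≤
        (Set.ncard {z ∈ Λ | x < z.re ∧ z.re < x + l ∧
          -Real.pi ≤ z.im ∧ z.im < Real.pi} : ℝ)) :
    ∃ C : ℝ, 0 < C ∧ ∀ t : ℝ, 0 ≤ t →
      (2 * α + ε) * (t ^ 2 / 2 - C * t) ≤
        (Set.ncard (Λ ∩ Metric.closedBall (0 : ℂ) t) : ℝ) := by
  have hπ := Real.pi_pos
  have hρ : 0 < 2 * α + ε := by positivity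
  refine ⟨l + 2 * Real.pi, by positivity, fun t ht => ?_⟩
  rcases le_or_gt t (l + 2 * Real.pi) with hsmall | hlarge
  · have hneg : t ^ 2 / 2 - (l + 2 * Real.pi) * t ≤ 0 := by nlinarith
    exact (mul_nonpos_of_nonneg_of_nonpos hρ.le hneg).trans (Nat.cast_nonneg _)
  have harea := pi_mul_sq_le_ncard_cellsIn hl hπ hlarge.le
  have hcount := ncard_cellsIn_mul_le_ncard hl hπ hper (hfin t) hstrip
  have hcells : (t - (l + 2 * Real.pi)) ^ 2 / 2 ≤ (cellsIn l Real.pi t).ncard * l := by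
    nlinarith
  calc (2 * α + ε) * (t ^ 2 / 2 - (l + 2 * Real.pi) * t)
      ≤ (2 * α + ε) * ((t - (l + 2 * Real.pi)) ^ 2 / 2) := by gcongr; nlinarith
    _ ≤ (2 * α + ε) * ((cellsIn l Real.pi t).ncard * l) := by gcongr
    _ = (cellsIn l Real.pi t).ncard * ((2 * α + ε) * l) := by ring
    _ ≤ _ := hcount
end
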